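/- Let R be a commutative ring, α, β, ε ∈ R with ε² = 1. Define a_n = Σ_{i+j=n} α^i β^j and s_n = Σ_{d=0}^{n} ε^d (the coefficients of the weight-one Eisenstein-type series with character ε at a prime q). Then in R[[X]]: (Σ_{n≥0} a_n s_n X^n)·(1 − αX)(1 − βX)(1 − αεX)(1 − βεX) = 1 − αβεX². -/

import Mathlib

/-!
Write `hₙ(α, β) = Σ_{i+j=n} αⁱβʲ`, the coefficients of `1 / ((1 - αX)(1 - βX))`; then
`aₙ = hₙ(α, β)` and `sₙ = hₙ(1, ε)`, and the statement is the case `γ = 1`, `δ = ε` of the local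
Rankin–Selberg identity
`Σ hₙ(α, β) hₙ(γ, δ) Xⁿ · (1 - αγX)(1 - βγX)(1 - αδX)(1 - βδX) = 1 - αβγδX²`.
Multiplying the recursions `hₙ₊₁(α, β) = αⁿ⁺¹ + β hₙ(α, β)` and `hₙ₊₁(γ, δ) = γⁿ⁺¹ + δ hₙ(γ, δ)`
expresses `(1 - βδX) Σ hₙ(α, β) hₙ(γ, δ) Xⁿ` through the rescaled series `Σ γⁿ hₙ(α, β) Xⁿ`,
`Σ αⁿ hₙ(γ, δ) Xⁿ` and `Σ (αγ)ⁿ Xⁿ`, whose denominators are known; clearing them leaves a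
polynomial identity.
-/

open PowerSeries
open Finset (mul_sum)
open Finset.HasAntidiagonal (antidiagonal)

section

variable {R : Type*} [CommRing R]

def completeHomogeneous₂ (α β : R) (n : ℕ) : R :=
  ∑ ij ∈ antidiagonal n, α ^ ij.1 * β ^ ij.2

@[simp]
lemma completeHomogeneous₂_zero (α β : R) : completeHomogeneous₂ α β 0 = 1 := by
  simp [completeHomogeneous₂]

lemma completeHomogeneous₂_succ (α β : R) (n : ℕ) :
    completeHomogeneous₂ α β (n + 1) = α ^ (n + 1) + β * completeHomogeneous₂ α β n := by
  simp only [completeHomogeneous₂, Finset.Nat.sum_antidiagonal_succ', pow_zero, mul_one, mul_sum,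
    pow_succ]
  ring_nf

lemma rescale_mk_one_mul_one_sub (c : R) : rescale c (mk 1) * (1 - C c * X) = 1 := by
  rw [← rescale_X, ← map_one (rescale c), ← map_sub, ← map_mul, mk_one_mul_one_sub_eq_one]

lemma rescale_mk_one_mul_rescale_mk_one_mul (a b : R) :
    rescale a (mk 1) * rescale b (mk 1) * (1 - C a * X) * (1 - C b * X) = 1 := by
  linear_combination (rescale b (mk 1) * (1 - C b * X)) * rescale_mk_one_mul_one_sub a +
    rescale_mk_one_mul_one_sub b

lemma mk_completeHomogeneous₂ (α β : R) :
    mk (completeHomogeneous₂ α β) = rescale α (mk 1) * rescale β (mk 1) := by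
  ext n
  simp [coeff_mul, completeHomogeneous₂]

lemma rescale_mk_completeHomogeneous₂ (c α β : R) :
    rescale c (mk (completeHomogeneous₂ α β)) =
      rescale (α * c) (mk 1) * rescale (β * c) (mk 1) := by
  rw [mk_completeHomogeneous₂, map_mul, rescale_rescale, rescale_rescale]

def rankinSelbergSeries (α β γ δ : R) : R⟦X⟧ :=
  mk fun n => completeHomogeneous₂ α β n * completeHomogeneous₂ γ δ n

lemma rankinSelbergSeries_eq_one_add_X_mul (α β γ δ : R) :
    rankinSelbergSeries α β γ δ =
      1 + X * (C (β * δ) * rankinSelbergSeries α β γ δ +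
        C (β * γ) * rescale γ (mk (completeHomogeneous₂ α β)) +
        C (α * δ) * rescale α (mk (completeHomogeneous₂ γ δ)) +
        C (α * γ) * rescale (α * γ) (mk 1)) := by
  ext (_ | n)
  · simp [rankinSelbergSeries]
  · simp only [rankinSelbergSeries, map_add, coeff_succ_X_mul, coeff_C_mul, coeff_rescale,
      coeff_mk, coeff_one, n.succ_ne_zero, if_false, completeHomogeneous₂_succ, Pi.one_apply]
    ring

theorem rankinSelbergSeries_mul (α β γ δ : R) :
    rankinSelbergSeries α β γ δ *
        (1 - C (α * γ) * X) * (1 - C (β * γ) * X) * (1 - C (α * δ) * X) * (1 - C (β * δ) * X) =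
      1 - C (α * β * γ * δ) * X ^ 2 := by
  have hU := rankinSelbergSeries_eq_one_add_X_mul α β γ δ
  rw [rescale_mk_completeHomogeneous₂, rescale_mk_completeHomogeneous₂] at hU
  have hA := rescale_mk_one_mul_rescale_mk_one_mul (α * γ) (β * γ)
  have hB := rescale_mk_one_mul_rescale_mk_one_mul (γ * α) (δ * α)
  have hG := rescale_mk_one_mul_one_sub (α * γ)
  simp only [map_mul] at hU hA hB hG ⊢
  linear_combination
    (1 - C α * C γ * X) * (1 - C β * C γ * X) * (1 - C α * C δ * X) * hU +
    C β * C γ * X * (1 - C α * C δ * X) * hA + C α * C δ * X * (1 - C β * C γ * X) * hB +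
    C α * C γ * X * (1 - C β * C γ * X) * (1 - C α * C δ * X) * hG

end

theorem stmt17_general (R : Type*) [CommRing R] (α β ε : R)
    (a s : ℕ → R)
    (ha : ∀ n : ℕ, a n = ∑ ij ∈ Finset.HasAntidiagonal.antidiagonal n, α ^ ij.1 * β ^ ij.2)
    (hs : ∀ n : ℕ, s n = ∑ d ∈ Finset.range (n + 1), ε ^ d) :
    (PowerSeries.mk fun n => a n * s n) *
        (1 - PowerSeries.C α * PowerSeries.X) *
        (1 - PowerSeries.C β * PowerSeries.X) *
        (1 - PowerSeries.C (α * ε) * PowerSeries.X) *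
        (1 - PowerSeries.C (β * ε) * PowerSeries.X) =
      1 - PowerSeries.C (α * β * ε) * PowerSeries.X ^ 2 := by
  obtain rfl : a = completeHomogeneous₂ α β := funext ha
  obtain rfl : s = completeHomogeneous₂ 1 ε := funext fun n => by
    rw [hs, completeHomogeneous₂, ← Finset.Nat.sum_antidiagonal_swap]
    simp [Finset.Nat.sum_antidiagonal_eq_sum_range_succ_mk]
  simpa [rankinSelbergSeries] using rankinSelbergSeries_mul α β 1 ε

/-- The Rankin–Selberg local identity against a weight-one Eisenstein series:
with `a_n = Σ_{i+j=n} α^i β^j`, `ε² = 1` and `s_n = Σ_{d=0}^n ε^d`, one has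
`(Σ a_n s_n X^n)(1−αX)(1−βX)(1−αεX)(1−βεX) = 1 − αβε X²` in `R⟦X⟧`. -/
theorem stmt17 (R : Type*) [CommRing R] (α β ε : R) (hε : ε ^ 2 = 1)
    (a s : ℕ → R)
    (ha : ∀ n : ℕ, a n = ∑ ij ∈ Finset.HasAntidiagonal.antidiagonal n, α ^ ij.1 * β ^ ij.2)
    (hs : ∀ n : ℕ, s n = ∑ d ∈ Finset.range (n + 1), ε ^ d) :
    (PowerSeries.mk fun n => a n * s n) *
        (1 - PowerSeries.C α * PowerSeries.X) *
        (1 - PowerSeries.C β * PowerSeries.X) *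
        (1 - PowerSeries.C (α * ε) * PowerSeries.X) *
        (1 - PowerSeries.C (β * ε) * PowerSeries.X) =
      1 - PowerSeries.C (α * β * ε) * PowerSeries.X ^ 2 :=
  stmt17_general R α β ε a s ha hs
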